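/- arXiv:1804.11329 — 2 statements merged into one kernel-verified Lean document; each statement's English description precedes it below -/
import Mathlib

section
/- Let κ be a cardinal such that □_κ holds. Then for every stationary subset S ⊆ κ⁺ there is a stationary subset T ⊆ S that does not reflect. -/
/-!
Fix a `□_κ`-sequence `C` and put `L = κ⁺`. The limit ordinals below `L` form a club, and on them
`β ↦ otp C_β` takes at most `κ` values; as `L` is regular, some value `ξ` is taken on a stationary
set `T ⊆ S`. Suppose `T` reflects at `α`, where `cf α > ω`. Then `T` meets the club `acc C_α` of
`α` in two points `β₁ < β₂`. Coherence gives `C_{β₁} = C_α ∩ β₁ = C_{β₂} ∩ β₁`, a proper initial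
segment of `C_{β₂}`, so `otp C_{β₁} < otp C_{β₂}`, although both are `ξ`.
-/

namespace PaperStatementOne

open Ordinal Set

/-- `C` is closed in `lam`: every ordinal `δ < lam` which is a limit of points of `C`
below it belongs to `C`. -/
def IsClosedIn (C : Set Ordinal) (lam : Ordinal) : Prop :=
  ∀ δ < lam, (C ∩ Set.Iio δ).Nonempty → sSup (C ∩ Set.Iio δ) = δ → δ ∈ C

/-- `C` is unbounded in `lam`. -/
def IsUnboundedIn (C : Set Ordinal) (lam : Ordinal) : Prop :=
  ∀ β < lam, ∃ γ ∈ C, β ≤ γ ∧ γ < lam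

/-- `C` is a club (closed and unbounded) subset of `lam`. -/
def IsClubIn (C : Set Ordinal) (lam : Ordinal) : Prop :=
  C ⊆ Set.Iio lam ∧ IsClosedIn C lam ∧ IsUnboundedIn C lam

/-- `S` is a stationary subset of `lam`: it meets every club subset of `lam`. -/
def IsStationaryIn (S : Set Ordinal) (lam : Ordinal) : Prop :=
  S ⊆ Set.Iio lam ∧ ∀ C : Set Ordinal, IsClubIn C lam → (S ∩ C).Nonempty

/-- `S` reflects at `α`: `cf α > ω` and `S ∩ α` is stationary in `α`. -/
def ReflectsAt (S : Set Ordinal) (α : Ordinal) : Prop :=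
  Cardinal.aleph0 < α.cof ∧ IsStationaryIn (S ∩ Set.Iio α) α

/-- A stationary `S ⊆ lam` reflects if it reflects at some `α < lam`. -/
def Reflects (S : Set Ordinal) (lam : Ordinal) : Prop :=
  ∃ α < lam, ReflectsAt S α

/-- The set of accumulation points of `C`. -/
def AccPts (C : Set Ordinal) : Set Ordinal :=
  {β | (C ∩ Set.Iio β).Nonempty ∧ sSup (C ∩ Set.Iio β) = β}

/-- The order type of a set of ordinals. -/
noncomputable def ordType (C : Set Ordinal.{0}) : Ordinal.{1} :=
  Ordinal.type (Subrel ((· < ·) : Ordinal.{0} → Ordinal.{0} → Prop) (· ∈ C))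

/-- `⟨C α | α < κ⁺ limit⟩` is a `□_κ`-sequence: each `C α` is club in `α`, has order
type at most `κ`, and the sequence is coherent. -/
def IsSquareSeq (κ : Cardinal.{0}) (C : Ordinal.{0} → Set Ordinal.{0}) : Prop :=
  ∀ α : Ordinal, α < (Order.succ κ).ord → Order.IsSuccLimit α →
    IsClubIn (C α) α ∧ ordType (C α) ≤ Ordinal.lift.{1,0} κ.ord ∧
      ∀ β ∈ AccPts (C α), C β = C α ∩ Set.Iio β

/-- `□_κ` holds. -/
def Square (κ : Cardinal.{0}) : Prop :=
  ∃ C : Ordinal → Set Ordinal, IsSquareSeq κ C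

open scoped Cardinal

theorem mem_accPts_iff {C : Set Ordinal} {β : Ordinal} :
    β ∈ AccPts C ↔ 0 < β ∧ ∀ ε < β, ∃ γ ∈ C, ε < γ ∧ γ < β := by
  have hbdd : BddAbove (C ∩ Iio β) := bddAbove_Iio.mono inter_subset_right
  constructor
  · rintro ⟨⟨γ, hγC, hγβ⟩, hsup⟩
    refine ⟨zero_le.trans_lt hγβ, fun ε hε => ?_⟩
    obtain ⟨δ, ⟨hδC, hδβ⟩, hεδ⟩ :=
      exists_lt_of_lt_csSup (s := C ∩ Iio β) ⟨γ, hγC, hγβ⟩ (hsup.symm ▸ hε)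
    exact ⟨δ, hδC, hεδ, hδβ⟩
  · rintro ⟨hβ, h⟩
    obtain ⟨γ, hγC, -, hγβ⟩ := h 0 hβ
    refine ⟨⟨γ, hγC, hγβ⟩, le_antisymm (csSup_le ⟨γ, hγC, hγβ⟩ fun x hx => hx.2.le) ?_⟩
    refine le_of_forall_lt fun ε hε => ?_
    obtain ⟨δ, hδC, hεδ, hδβ⟩ := h ε hε
    exact hεδ.trans_le (le_csSup hbdd ⟨hδC, hδβ⟩)

theorem isSuccLimit_of_mem_accPts {C : Set Ordinal} {β : Ordinal} (hβ : β ∈ AccPts C) :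
    Order.IsSuccLimit β := by
  rw [mem_accPts_iff] at hβ
  refine Ordinal.isSuccLimit_iff.2 ⟨hβ.1.ne', Order.isSuccPrelimit_of_succ_lt fun ε hε => ?_⟩
  obtain ⟨γ, -, hεγ, hγβ⟩ := hβ.2 ε hε
  exact (Order.succ_le_of_lt hεγ).trans_lt hγβ

theorem accPts_mono {A B : Set Ordinal} (h : A ⊆ B) : AccPts A ⊆ AccPts B := by
  simp only [subset_def, mem_accPts_iff]
  exact fun β ⟨hβ, hA⟩ => ⟨hβ, fun ε hε => (hA ε hε).imp fun γ hγ => ⟨h hγ.1, hγ.2⟩⟩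

theorem accPts_accPts_subset (C : Set Ordinal) : AccPts (AccPts C) ⊆ AccPts C := by
  simp only [subset_def, mem_accPts_iff]
  refine fun β ⟨hβ, hacc⟩ => ⟨hβ, fun ε hε => ?_⟩
  obtain ⟨γ, ⟨-, hγ⟩, hεγ, hγβ⟩ := hacc ε hε
  obtain ⟨δ, hδC, hεδ, hδγ⟩ := hγ ε hεγ
  exact ⟨δ, hδC, hεδ, hδγ.trans hγβ⟩

theorem iSup_mem_accPts {C : Set Ordinal} {s : ℕ → Ordinal} (hsC : ∀ n, s n ∈ C)
    (hs : StrictMono s) : (⨆ n, s n) ∈ AccPts C := by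
  have hlt : ∀ n, s n < ⨆ n, s n := fun n =>
    (hs (Nat.lt_succ_self n)).trans_le (Ordinal.le_iSup s (n + 1))
  refine mem_accPts_iff.2 ⟨zero_le.trans_lt (hlt 0), fun ε hε => ?_⟩
  obtain ⟨n, hn⟩ := Ordinal.lt_iSup_iff.1 hε
  exact ⟨s n, hsC n, hn, hlt n⟩

theorem IsClubIn.accPts_inter_Iio {C : Set Ordinal} {L : Ordinal} (hL : ℵ₀ < L.cof)
    (hC : IsClubIn C L) : IsClubIn (AccPts C ∩ Iio L) L := by
  refine ⟨inter_subset_right, fun δ hδ hne hsup => ⟨?_, hδ⟩, fun β hβ => ?_⟩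
  · exact accPts_accPts_subset C (accPts_mono inter_subset_left ⟨hne, hsup⟩)
  · have hnext : ∀ δ < L, ∃ γ ∈ C, δ < γ ∧ γ < L := fun δ hδ => by
      obtain ⟨γ, hγC, hγ, hγL⟩ := hC.2.2 (Order.succ δ)
        ((Ordinal.one_lt_cof_iff.1 (Cardinal.one_lt_aleph0.trans hL)).succ_lt hδ)
      exact ⟨γ, hγC, Order.succ_le_iff.1 hγ, hγL⟩
    choose! g hgC hgδ hgL using hnext
    have hiter : ∀ n, g^[n] β < L := fun n => by
      induction n with
      | zero => exact hβ
      | succ n ih => rw [Function.iterate_succ_apply']; exact hgL _ ih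
    have hs : StrictMono fun n => g (g^[n] β) := strictMono_nat_of_lt_succ fun n => by
      simpa only [Function.iterate_succ_apply'] using hgδ _ (hgL _ (hiter n))
    have hsupL : (⨆ n, g (g^[n] β)) < L :=
      Ordinal.lift_iSup_lt_of_lt_cof (by simpa using hL) fun n => hgL _ (hiter n)
    refine ⟨_, ⟨iSup_mem_accPts (fun n => hgC _ (hiter n)) hs, hsupL⟩, ?_, hsupL⟩
    exact (hgδ β hβ).le.trans (Ordinal.le_iSup (fun n => g (g^[n] β)) 0)

-- Clubs and stationary sets in `L` correspond to Mathlib's `IsClub` and `IsStationary` on the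
-- type `Iio L`, which provides intersections of clubs and the pigeonhole principle.
theorem isClosedIn_image_val_iff {L : Ordinal} {t : Set (Iio L)} :
    IsClosedIn (Subtype.val '' t) L ↔ DirSupClosed t := by
  rw [dirSupClosed_iff_of_linearOrder]
  constructor
  · intro hclosed d hdt ⟨x, hxd⟩ a ha
    by_cases had : a ∈ d
    · exact hdt had
    have hlt : ∀ y ∈ d, y < a := fun y hy => (ha.1 hy).lt_of_ne fun h => had (h ▸ hy)
    have hacc : a.1 ∈ AccPts (Subtype.val '' t) := by
      refine mem_accPts_iff.2 ⟨zero_le.trans_lt (hlt x hxd), fun ε hε => ?_⟩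
      obtain ⟨y, hyd, hεy⟩ := (lt_isLUB_iff ha (b := ⟨ε, hε.trans a.2⟩)).1 hε
      exact ⟨y, ⟨y, hdt hyd, rfl⟩, hεy, hlt y hyd⟩
    exact Subtype.val_injective.mem_set_image.1 (hclosed a a.2 hacc.1 hacc.2)
  · intro hclosed δ hδL hne hsup
    have hacc : δ ∈ AccPts (Subtype.val '' t) := ⟨hne, hsup⟩
    obtain ⟨_, ⟨x, hxt, rfl⟩, hxδ⟩ := hne
    refine ⟨⟨δ, hδL⟩, hclosed (d := t ∩ Iio ⟨δ, hδL⟩) inter_subset_left ⟨x, hxt, hxδ⟩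
      ⟨fun y hy => hy.2.le, fun b hb => ?_⟩, rfl⟩
    refine le_of_forall_lt fun ε hε => ?_
    obtain ⟨-, ⟨γ, hγt, rfl⟩, hεγ, hγδ⟩ := (mem_accPts_iff.1 hacc).2 ε hε
    exact hεγ.trans_le (hb ⟨hγt, hγδ⟩)

theorem isUnboundedIn_image_val_iff {L : Ordinal} {t : Set (Iio L)} :
    IsUnboundedIn (Subtype.val '' t) L ↔ IsCofinal t := by
  constructor
  · intro h x
    obtain ⟨-, ⟨y, hyt, rfl⟩, hxy, -⟩ := h x x.2
    exact ⟨y, hyt, hxy⟩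
  · intro h β hβ
    obtain ⟨y, hyt, hβy⟩ := h ⟨β, hβ⟩
    exact ⟨y, ⟨y, hyt, rfl⟩, hβy, y.2⟩

theorem isClubIn_image_val_iff {L : Ordinal} {t : Set (Iio L)} :
    IsClubIn (Subtype.val '' t) L ↔ IsClub t := by
  rw [IsClubIn, isClosedIn_image_val_iff, isUnboundedIn_image_val_iff, isClub_iff]
  exact and_iff_right (image_subset_iff.2 fun x _ => x.2)

theorem isClubIn_iff_isClub_preimage {C : Set Ordinal} {L : Ordinal} :
    IsClubIn C L ↔ C ⊆ Iio L ∧ IsClub (Subtype.val ⁻¹' C : Set (Iio L)) := by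
  rw [← isClubIn_image_val_iff, Subtype.image_preimage_coe]
  exact ⟨fun h => ⟨h.1, by rwa [inter_eq_right.2 h.1]⟩,
    fun ⟨hC, h⟩ => by rwa [inter_eq_right.2 hC] at h⟩

theorem isStationaryIn_iff_isStationary_preimage {S : Set Ordinal} {L : Ordinal} :
    IsStationaryIn S L ↔ S ⊆ Iio L ∧ IsStationary (Subtype.val ⁻¹' S : Set (Iio L)) := by
  refine and_congr_right fun _ => ⟨fun h t ht => ?_, fun h C hC => ?_⟩
  · obtain ⟨-, hS, x, hxt, rfl⟩ := h _ (isClubIn_image_val_iff.2 ht)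
    exact ⟨x, hS, hxt⟩
  · obtain ⟨x, hxS, hxC⟩ := h (isClubIn_iff_isClub_preimage.1 hC).2
    exact ⟨x, hxS, hxC⟩

theorem cof_Iio_ne_aleph0 {L : Ordinal} (hL : L.cof ≠ ℵ₀) : Order.cof (Iio L) ≠ ℵ₀ := by
  rwa [Ordinal.cof_Iio, ← Ordinal.lift_cof, Ne, Cardinal.lift_eq_aleph0]

theorem IsClubIn.inter {A B : Set Ordinal} {L : Ordinal} (hL : L.cof ≠ ℵ₀)
    (hA : IsClubIn A L) (hB : IsClubIn B L) : IsClubIn (A ∩ B) L := by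
  rw [isClubIn_iff_isClub_preimage] at *
  exact ⟨inter_subset_left.trans hA.1, hA.2.inter (cof_Iio_ne_aleph0 hL) hB.2⟩

theorem IsStationaryIn.inter_isClubIn {S C : Set Ordinal} {L : Ordinal} (hL : L.cof ≠ ℵ₀)
    (hS : IsStationaryIn S L) (hC : IsClubIn C L) : IsStationaryIn (S ∩ C) L := by
  refine ⟨inter_subset_left.trans hS.1, fun D hD => ?_⟩
  obtain ⟨x, hxS, hxC, hxD⟩ := hS.2 _ (hC.inter hL hD)
  exact ⟨x, ⟨hxS, hxC⟩, hxD⟩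

theorem IsStationaryIn.exists_isStationaryIn_fiber {S : Set Ordinal.{u}} {L : Ordinal.{u}}
    (hL : L.cof ≠ ℵ₀) (hS : IsStationaryIn S L) {ι : Type v} (f : Ordinal.{u} → ι)
    (hι : Cardinal.lift.{u + 1} #ι < Cardinal.lift.{v} (Cardinal.lift.{u + 1} L.cof)) :
    ∃ i, IsStationaryIn (S ∩ f ⁻¹' {i}) L := by
  rw [isStationaryIn_iff_isStationary_preimage] at hS
  have hcover : Subtype.val ⁻¹' S = ⋃ i, (Subtype.val ⁻¹' (S ∩ f ⁻¹' {i}) : Set (Iio L)) := by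
    ext x
    simp
  rw [hcover, isStationary_iUnion_iff (cof_Iio_ne_aleph0 hL)
    (by rwa [Ordinal.cof_Iio, ← Ordinal.lift_cof])] at hS
  obtain ⟨i, hi⟩ := hS.2
  exact ⟨i, isStationaryIn_iff_isStationary_preimage.2 ⟨inter_subset_left.trans hS.1, hi⟩⟩

theorem isClubIn_Iio (L : Ordinal) : IsClubIn (Iio L) L :=
  ⟨subset_rfl, fun _ hδ _ _ => hδ, fun β hβ => ⟨β, hβ, le_rfl, hβ⟩⟩

theorem isClubIn_Ioo {b L : Ordinal} (hL : Order.IsSuccLimit L) (hb : b < L) :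
    IsClubIn (Ioo b L) L := by
  refine ⟨Ioo_subset_Iio_self, fun δ hδL hne _ => ?_, fun β hβ => ?_⟩
  · obtain ⟨γ, ⟨hbγ, -⟩, hγδ⟩ := hne
    exact ⟨hbγ.trans hγδ, hδL⟩
  · refine ⟨max β (Order.succ b), ⟨?_, max_lt hβ (hL.succ_lt hb)⟩, le_max_left _ _, ?_⟩
    · exact (Order.lt_succ b).trans_le (le_max_right _ _)
    · exact max_lt hβ (hL.succ_lt hb)

theorem IsStationaryIn.nontrivial {S : Set Ordinal} {L : Ordinal} (hL : Order.IsSuccLimit L)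
    (hS : IsStationaryIn S L) : S.Nontrivial := by
  obtain ⟨β, hβS, hβL⟩ := hS.2 _ (isClubIn_Iio L)
  obtain ⟨γ, hγS, hβγ, -⟩ := hS.2 _ (isClubIn_Ioo hL hβL)
  exact ⟨β, hβS, γ, hγS, hβγ.ne⟩

theorem ordType_inter_Iio_lt {B : Set Ordinal} {b : Ordinal} (hb : b ∈ B) :
    ordType (B ∩ Iio b) < ordType B := by
  refine PrincipalSeg.ordinal_type_lt
    ⟨⟨⟨fun x => ⟨x.1, x.2.1⟩, fun x y h => ?_⟩, Iff.rfl⟩, ⟨b, hb⟩, fun y => ?_⟩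
  · simpa [Subtype.ext_iff] using h
  · constructor
    · rintro ⟨x, rfl⟩
      exact x.2.2
    · intro hy
      exact ⟨⟨y.1, y.2, hy⟩, Subtype.ext rfl⟩

theorem IsSquareSeq.ordType_strictMonoOn {κ : Cardinal} {C : Ordinal → Set Ordinal}
    (hC : IsSquareSeq κ C) {α : Ordinal} (hα : α < (Order.succ κ).ord)
    (hαlim : Order.IsSuccLimit α) :
    StrictMonoOn (fun β => ordType (C β)) (AccPts (C α) ∩ Iio α) := by
  obtain ⟨hclub, -, hcoh⟩ := hC α hα hαlim
  intro β₁ hβ₁ β₂ hβ₂ hlt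
  have hβ₁C : β₁ ∈ C α := hclub.2.1 β₁ hβ₁.2 hβ₁.1.1 hβ₁.1.2
  have hβ₁β₂ : C β₁ = C β₂ ∩ Iio β₁ := by
    rw [hcoh β₁ hβ₁.1, hcoh β₂ hβ₂.1, inter_assoc, Iio_inter_Iio, min_eq_right hlt.le]
  simpa only [hβ₁β₂] using ordType_inter_Iio_lt (hcoh β₂ hβ₂.1 ▸ ⟨hβ₁C, hlt⟩ : β₁ ∈ C β₂)

theorem IsSquareSeq.not_reflects {κ : Cardinal} {C : Ordinal → Set Ordinal}
    (hC : IsSquareSeq κ C) {T : Set Ordinal} {ξ : Ordinal} (hT : ∀ β ∈ T, ordType (C β) = ξ) :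
    ¬ Reflects T (Order.succ κ).ord := by
  rintro ⟨α, hαL, hcof, hstat⟩
  have hαlim : Order.IsSuccLimit α :=
    Ordinal.one_lt_cof_iff.1 (Cardinal.one_lt_aleph0.trans hcof)
  have hstat' : IsStationaryIn ((T ∩ Iio α) ∩ (AccPts (C α) ∩ Iio α)) α :=
    hstat.inter_isClubIn hcof.ne' ((hC α hαL hαlim).1.accPts_inter_Iio hcof)
  obtain ⟨β₁, ⟨⟨hβ₁T, -⟩, hβ₁⟩, β₂, ⟨⟨hβ₂T, -⟩, hβ₂⟩, hne⟩ := hstat'.nontrivial hαlim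
  exact hne ((hC.ordType_strictMonoOn hαL hαlim).injOn hβ₁ hβ₂
    ((hT β₁ hβ₁T).trans (hT β₂ hβ₂T).symm))

/-- If `□_κ` holds then every stationary subset of `κ⁺` has a stationary subset that
does not reflect. -/
theorem square_implies_nonreflecting_stationary_subset
    (κ : Cardinal) (hκ : Cardinal.aleph0 ≤ κ) (hsq : Square κ)
    (S : Set Ordinal) (hS : IsStationaryIn S (Order.succ κ).ord) :
    ∃ T ⊆ S, IsStationaryIn T (Order.succ κ).ord ∧ ¬ Reflects T (Order.succ κ).ord := by
  obtain ⟨C, hC⟩ := hsq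
  set L := (Order.succ κ).ord
  have hcof : L.cof = Order.succ κ := (Cardinal.isRegular_succ hκ).cof_ord
  have hL : ℵ₀ < L.cof := hcof ▸ hκ.trans_lt (Order.lt_succ κ)
  have hS' : IsStationaryIn (S ∩ (AccPts (Iio L) ∩ Iio L)) L :=
    hS.inter_isClubIn hL.ne' ((isClubIn_Iio L).accPts_inter_Iio hL)
  have hvalues : Cardinal.lift.{1} #(Iic (Ordinal.lift.{1} κ.ord)) <
      Cardinal.lift.{2} (Cardinal.lift.{1} L.cof) := by
    rw [← Order.Iio_succ, Cardinal.mk_Iio_ordinal, hcof]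
    simpa using (Cardinal.add_one_eq (Cardinal.aleph0_le_lift.{0, 2}.2 hκ)).le
  -- `projIic` leaves the order types `otp C_β ≤ κ` at limits `β < L` unchanged.
  obtain ⟨ξ, hξ⟩ := hS'.exists_isStationaryIn_fiber hL.ne'
    (fun β => projIic (Ordinal.lift.{1} κ.ord) (ordType (C β))) hvalues
  refine ⟨_, fun β hβ => hβ.1.1, hξ, hC.not_reflects (ξ := ξ.1) ?_⟩
  rintro β ⟨⟨-, hβacc, hβL⟩, hβξ⟩
  rw [mem_preimage, mem_singleton_iff,
    projIic_of_mem (hC β hβL (isSuccLimit_of_mem_accPts hβacc)).2.1] at hβξ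
  exact congrArg Subtype.val hβξ

end PaperStatementOne
end

section
/- The forcing ℍ satisfies the Strong Prikry Property: for every dense open set D ⊆ ℍ and every condition p ∈ ℍ there are a direct extension p⋆ ≤* p and a natural number n such that every q ≤ p⋆ with len q ≥ n belongs to D. -/
/-! Statement 18: the forcing `ℍ` satisfies the Strong Prikry Property. -/

namespace PaperStatementEighteen

open Ordinal Set

/-- A normal (`κ`-complete, nonprincipal) ultrafilter on `κ`. -/
structure NormalMeasure (κ : Cardinal.{0}) : Type 2 where
  U : Set (Set Ordinal.{0})
  subsets : ∀ A ∈ U, A ⊆ Set.Iio κ.ord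
  univ_mem : Set.Iio κ.ord ∈ U
  empty_nmem : (∅ : Set Ordinal.{0}) ∉ U
  upward : ∀ A ∈ U, ∀ B : Set Ordinal.{0}, A ⊆ B → B ⊆ Set.Iio κ.ord → B ∈ U
  ultra : ∀ A : Set Ordinal.{0}, A ⊆ Set.Iio κ.ord → (A ∈ U ∨ (Set.Iio κ.ord \ A) ∈ U)
  complete : ∀ s : Set (Set Ordinal.{0}), s ⊆ U →
    Cardinal.mk s < Cardinal.lift.{1,0} κ → ⋂₀ s ∈ U
  nonprincipal : ∀ α : Ordinal.{0}, ({α} : Set Ordinal.{0}) ∉ U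
  normal : ∀ A ∈ U, ∀ g : Ordinal.{0} → Ordinal.{0},
    (∀ α ∈ A, 0 < α → g α < α) → ∃ γ : Ordinal.{0}, {α ∈ A | g α = γ} ∈ U

/-- Auxiliary data on the forcing `𝔸`: unique greatest lower bounds, and a
`κ⁺`-closed dense subset closed under these greatest lower bounds. -/
structure AData (κ : Cardinal.{0}) (A : Type 1) [Preorder A] : Type 2 where
  /-- greatest lower bounds -/
  glb : A → A → A
  glb_le_left : ∀ a b : A, glb a b ≤ a
  glb_le_right : ∀ a b : A, glb a b ≤ b
  glb_greatest : ∀ a b c : A, c ≤ a → c ≤ b → c ≤ glb a b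
  glb_unique : ∀ a b c : A, c ≤ a → c ≤ b → (∀ d : A, d ≤ a → d ≤ b → d ≤ c) → c = glb a b
  /-- the `κ⁺`-closed dense subset -/
  D : Set A
  D_dense : ∀ a : A, ∃ d ∈ D, d ≤ a
  D_glb : ∀ a ∈ D, ∀ b ∈ D, glb a b ∈ D
  D_closed : ∀ (δ : Ordinal.{0}), δ < (Order.succ κ).ord →
    ∀ f : {o : Ordinal.{0} // o < δ} → A, (∀ i, f i ∈ D) →
    (∀ i j : {o : Ordinal.{0} // o < δ}, (i : Ordinal.{0}) ≤ (j : Ordinal.{0}) →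
      (f j : A) ≤ f i) →
    ∃ b ∈ D, ∀ i, b ≤ f i

/-- A condition `⟨T, F⟩` of the forcing `ℍ` built from the measure `U` on `κ` and the
forcing `𝔸` (with `jmap g` representing `j(g)(κ)`, where `j` is the ultrapower map by
`U`; recall `j(𝔸) = 𝔸`). -/
structure HCond (κ : Cardinal.{0}) (U : NormalMeasure κ) (A : Type 1) [Preorder A]
    (jmap : (Ordinal.{0} → A) → A) : Type 1 where
  /-- the tree of strictly increasing finite sequences of regular cardinals -/
  T : Set (List Ordinal.{0})
  prefix_closed : ∀ s ∈ T, ∀ t : List Ordinal.{0}, t <+: s → t ∈ T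
  increasing : ∀ s ∈ T, s.Chain' (· < ·)
  regular : ∀ s ∈ T, ∀ α ∈ s, α < κ.ord ∧ α.card.ord = α ∧ α.card.IsRegular
  /-- the stem: the unique maximal element comparable with all elements of `T` -/
  stem : List Ordinal.{0}
  stem_mem : stem ∈ T
  stem_comparable : ∀ s ∈ T, s <+: stem ∨ stem <+: s
  /-- `T` is `U`-splitting above the stem -/
  splitting : ∀ s ∈ T, stem <+: s → {α : Ordinal.{0} | s ++ [α] ∈ T} ∈ U.U
  /-- the side condition function -/
  F : List Ordinal.{0} → A
  /-- stabilization: `j(g_t)(κ) = F t` for `t` extending the stem, where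
  `g_t(α) = F (t ⌢ α)` -/
  stabilization : ∀ s ∈ T, stem <+: s → jmap (fun α => F (s ++ [α])) = F s

variable {κ : Cardinal.{0}} {U : NormalMeasure κ} {A : Type 1} [Preorder A]
  {jmap : (Ordinal.{0} → A) → A}

instance : Preorder (HCond κ U A jmap) where
  le q p := q.T ⊆ p.T ∧ ∀ s ∈ q.T, q.F s ≤ p.F s
  le_refl p := ⟨subset_rfl, fun _ _ => le_refl _⟩
  le_trans p q r hpq hqr :=
    ⟨hpq.1.trans hqr.1, fun s hs => (hpq.2 s hs).trans (hqr.2 s (hpq.1 hs))⟩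

/-- The direct extension order on `ℍ`: an extension with the same stem length. -/
def HDirectExt (q p : HCond κ U A jmap) : Prop :=
  q ≤ p ∧ q.stem.length = p.stem.length

section AUX

variable {κ : Cardinal.{0}} {U : NormalMeasure κ} {A : Type 1} [Preorder A]
  {jmap : (Ordinal.{0} → A) → A}

/-! ### List lemmas -/

lemma prefix_trichotomy {s₁ s₂ u : List Ordinal.{0}} (h1 : s₁ <+: u) (h2 : s₂ <+: u) :
    s₁ <+: s₂ ∨ s₂ <+: s₁ :=
  List.prefix_or_prefix_of_prefix h1 h2

lemma prefix_eq_of_length {s₁ s₂ u : List Ordinal.{0}} (h1 : s₁ <+: u) (h2 : s₂ <+: u)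
    (h : s₁.length = s₂.length) : s₁ = s₂ := by
  rcases prefix_trichotomy h1 h2 with h' | h'
  · exact h'.eq_of_length h
  · exact (h'.eq_of_length h.symm).symm

lemma prefix_concat_cases {s t : List Ordinal.{0}} {a : Ordinal.{0}} (h : s <+: t ++ [a]) :
    s <+: t ∨ s = t ++ [a] := by
  rcases prefix_trichotomy h (List.prefix_append t [a]) with h' | h'
  · exact Or.inl h'
  · by_cases hlen : s.length = t.length
    · exact Or.inl (((h'.eq_of_length hlen.symm) ▸ List.prefix_rfl))
    · refine Or.inr (h.eq_of_length ?_)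
      have h1 := h.length_le
      have h2 := h'.length_le
      simp only [List.length_append, List.length_cons, List.length_nil] at *
      omega

lemma concat_prefix_concat {s t : List Ordinal.{0}} {a b : Ordinal.{0}} {u : List Ordinal.{0}}
    (h1 : s ++ [a] <+: u) (h2 : t ++ [b] <+: u) (hst : s = t) : a = b := by
  subst hst
  have := prefix_eq_of_length h1 h2 (by simp)
  simpa using List.append_cancel_left this

/-! ### Ultrafilter lemmas -/

lemma U_nonempty {S : Set Ordinal.{0}} (h : S ∈ U.U) : S.Nonempty := by
  rcases S.eq_empty_or_nonempty with rfl | hne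
  · exact absurd h U.empty_nmem
  · exact hne

lemma U_not_subsingleton {S : Set Ordinal.{0}} (h : S ∈ U.U) (a : Ordinal.{0}) : ¬ S ⊆ {a} := by
  intro hsub
  rcases Set.subset_singleton_iff_eq.mp hsub with rfl | rfl
  · exact U.empty_nmem h
  · exact U.nonprincipal a h

lemma aleph0_lt_of_cond (p : HCond κ U A jmap) : Cardinal.aleph0.{0} < κ := by
  have hX := p.splitting p.stem p.stem_mem List.prefix_rfl
  obtain ⟨α, hα⟩ := U_nonempty hX
  have hs : p.stem ++ [α] ∈ p.T := hα
  have hreg := p.regular _ hs α (by simp)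
  have h1 : (Cardinal.aleph0.{0}).ord ≤ α := by
    rw [Cardinal.ord_le, ← hreg.2.1, Cardinal.card_ord]
    exact hreg.2.2.aleph0_le
  have h2 : (Cardinal.aleph0.{0}).ord < κ.ord := lt_of_le_of_lt h1 hreg.1
  exact Cardinal.ord_lt_ord.mp h2

lemma aleph0_lt_lift (hk : Cardinal.aleph0.{0} < κ) :
    Cardinal.aleph0.{1} < Cardinal.lift.{1,0} κ := by
  simpa using Cardinal.lift_lt.{0,1}.mpr hk

lemma U_inter (hk : Cardinal.aleph0.{0} < κ) {S₁ S₂ : Set Ordinal.{0}} (h1 : S₁ ∈ U.U)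
    (h2 : S₂ ∈ U.U) : S₁ ∩ S₂ ∈ U.U := by
  have : ⋂₀ ({S₁, S₂} : Set (Set Ordinal.{0})) ∈ U.U := by
    apply U.complete _ (by rintro x (rfl | rfl) <;> assumption)
    exact lt_of_le_of_lt Cardinal.mk_le_aleph0 (aleph0_lt_lift hk)
  rwa [Set.sInter_pair] at this

lemma U_compl {S : Set Ordinal.{0}} (hsub : S ⊆ Set.Iio κ.ord) (h : S ∉ U.U) :
    Set.Iio κ.ord \ S ∈ U.U :=
  (U.ultra S hsub).resolve_left h

lemma U_iInter (hk : Cardinal.aleph0.{0} < κ) (C : ℕ → Set Ordinal.{0}) (h : ∀ n, C n ∈ U.U) :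
    (⋂ n, C n) ∈ U.U := by
  have : ⋂₀ (Set.range C) ∈ U.U := by
    apply U.complete _ (by rintro x ⟨n, rfl⟩; exact h n)
    exact lt_of_le_of_lt (Set.countable_range C).le_aleph0 (aleph0_lt_lift hk)
  rwa [Set.sInter_range] at this


/-! ### HCond basics -/

lemma HCond.ext' {p q : HCond κ U A jmap} (hT : p.T = q.T) (hs : p.stem = q.stem)
    (hF : p.F = q.F) : p = q := by
  cases p; cases q
  simp only at hT hs hF
  subst hT; subst hs; subst hF
  rfl

lemma le_defn {q p : HCond κ U A jmap} :
    q ≤ p ↔ q.T ⊆ p.T ∧ ∀ s ∈ q.T, q.F s ≤ p.F s := Iff.rfl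

lemma mem_T_of_le {q p : HCond κ U A jmap} (h : q ≤ p) {s : List Ordinal.{0}}
    (hs : s ∈ q.T) : s ∈ p.T := h.1 hs

/-- The stem of an extension end-extends the stem. -/
lemma stem_prefix_of_le {q p : HCond κ U A jmap} (h : q ≤ p) : p.stem <+: q.stem := by
  rcases p.stem_comparable q.stem (h.1 q.stem_mem) with hc | hc
  swap
  · exact hc
  -- q.stem <+: p.stem; show they are equal
  have heq : q.stem = p.stem := by
    by_contra hne
    -- p.stem = q.stem ++ β :: r'
    obtain ⟨r, hr⟩ := hc
    have hrne : r ≠ [] := by rintro rfl; simp at hr; exact hne hr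
    obtain ⟨β, r', rfl⟩ := List.exists_cons_of_ne_nil hrne
    have hY := q.splitting q.stem q.stem_mem List.prefix_rfl
    apply U_not_subsingleton hY β
    intro α hα
    have hmem : q.stem ++ [α] ∈ p.T := h.1 hα
    rcases p.stem_comparable _ hmem with hc' | hc'
    · -- q.stem ++ [α] <+: p.stem = q.stem ++ β :: r'
      have : q.stem ++ [α] <+: q.stem ++ β :: r' := hr ▸ hc'
      have h2 : q.stem ++ [β] <+: q.stem ++ β :: r' := by
        refine ⟨r', by simp⟩
      have := concat_prefix_concat this h2 rfl
      simpa using this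
    · -- p.stem <+: q.stem ++ [α], and |p.stem| ≥ |q.stem| + 1
      have hlen : p.stem.length = (q.stem ++ [α]).length := by
        have h1 := hc'.length_le
        have h2 : q.stem.length < p.stem.length := by
          rw [← hr]; simp
        simp only [List.length_append, List.length_cons, List.length_nil] at *
        omega
      have hPeq : p.stem = q.stem ++ [α] := hc'.eq_of_length hlen
      have h2 : q.stem ++ [β] <+: p.stem := by
        rw [← hr]; exact ⟨r', by simp⟩
      have h3 : q.stem ++ [β] <+: q.stem ++ [α] := by rw [← hPeq]; exact h2
      have := concat_prefix_concat List.prefix_rfl h3 rfl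
      simpa using this
  rw [heq]

/-- Restriction of a condition to a node in its tree extending the stem. -/
def restrict (p : HCond κ U A jmap) (t : List Ordinal.{0}) (ht : t ∈ p.T)
    (hpt : p.stem <+: t) : HCond κ U A jmap where
  T := {s ∈ p.T | s <+: t ∨ t <+: s}
  prefix_closed := by
    rintro s ⟨hsT, hst⟩ u hu
    refine ⟨p.prefix_closed s hsT u hu, ?_⟩
    rcases hst with hst | hst
    · exact Or.inl (hu.trans hst)
    · exact prefix_trichotomy hu hst
  increasing := fun s hs => p.increasing s hs.1
  regular := fun s hs => p.regular s hs.1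
  stem := t
  stem_mem := ⟨ht, Or.inl List.prefix_rfl⟩
  stem_comparable := fun s hs => hs.2
  splitting := by
    intro s hs hts
    have : {α : Ordinal.{0} | s ++ [α] ∈ {s ∈ p.T | s <+: t ∨ t <+: s}} =
        {α : Ordinal.{0} | s ++ [α] ∈ p.T} := by
      ext α
      simp only [Set.mem_setOf_eq, Set.mem_sep_iff]
      constructor
      · exact fun h => h.1
      · intro h
        exact ⟨h, Or.inr (hts.trans (List.prefix_append s [α]))⟩
    rw [this]
    exact p.splitting s hs.1 (hpt.trans hts)
  F := p.F
  stabilization := fun s hs hts => p.stabilization s hs.1 (hpt.trans hts)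

lemma restrict_le {p : HCond κ U A jmap} {t : List Ordinal.{0}} (ht : t ∈ p.T)
    (hpt : p.stem <+: t) : restrict p t ht hpt ≤ p :=
  ⟨fun s hs => hs.1, fun s _ => le_refl _⟩

lemma le_restrict {q p : HCond κ U A jmap} {t : List Ordinal.{0}} (ht : t ∈ p.T)
    (hpt : p.stem <+: t) (hq : q ≤ p) (hts : t <+: q.stem) : q ≤ restrict p t ht hpt := by
  refine ⟨fun s hs => ⟨hq.1 hs, ?_⟩, fun s hs => hq.2 s hs⟩
  rcases q.stem_comparable s hs with hc | hc
  · exact prefix_trichotomy hc hts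
  · exact Or.inr (hts.trans hc)

lemma restrict_stem_self (p : HCond κ U A jmap) (h1 : p.stem ∈ p.T) (h2 : p.stem <+: p.stem) :
    restrict p p.stem h1 h2 = p := by
  refine HCond.ext' ?_ rfl rfl
  ext s
  simp only [restrict, Set.mem_sep_iff]
  exact ⟨fun h => h.1, fun h => ⟨h, p.stem_comparable s h⟩⟩

lemma restrict_restrict {p : HCond κ U A jmap} {t u : List Ordinal.{0}} (ht : t ∈ p.T)
    (hpt : p.stem <+: t) (hu : u ∈ (restrict p t ht hpt).T) (htu : t <+: u)
    (hu' : u ∈ p.T) (hpu : p.stem <+: u) :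
    restrict (restrict p t ht hpt) u hu htu = restrict p u hu' hpu := by
  refine HCond.ext' ?_ rfl rfl
  ext s
  simp only [restrict, Set.mem_sep_iff]
  constructor
  · rintro ⟨⟨h1, _⟩, h3⟩; exact ⟨h1, h3⟩
  · rintro ⟨h1, h2⟩
    refine ⟨⟨h1, ?_⟩, h2⟩
    rcases h2 with h2 | h2
    · exact prefix_trichotomy h2 htu
    · exact Or.inr (htu.trans h2)

/-! ### Conditions with constant side condition -/

/-- Replace the side condition function by a constant. -/
def constF (p : HCond κ U A jmap) (b : A)
    (jc : ∀ a : A, jmap (fun _ => a) = a) : HCond κ U A jmap where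
  T := p.T
  prefix_closed := p.prefix_closed
  increasing := p.increasing
  regular := p.regular
  stem := p.stem
  stem_mem := p.stem_mem
  stem_comparable := p.stem_comparable
  splitting := p.splitting
  F := fun _ => b
  stabilization := fun _ _ _ => jc b

lemma constF_le {p : HCond κ U A jmap} {b : A} {jc : ∀ a : A, jmap (fun _ => a) = a}
    (hb : ∀ s ∈ p.T, b ≤ p.F s) : constF p b jc ≤ p :=
  ⟨subset_rfl, hb⟩

/-! ### Lower bounds from `κ⁺`-closure -/

lemma exists_AD_lb (AD : AData κ A) (v : {o : Ordinal.{0} // o < κ.ord} → A) :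
    ∃ b ∈ AD.D, ∀ ξ, b ≤ v ξ := by
  have hsucc : κ.ord < (Order.succ κ).ord := Cardinal.ord_lt_ord.mpr (Order.lt_succ κ)
  let r : {o : Ordinal.{0} // o < κ.ord} → {o : Ordinal.{0} // o < κ.ord} → Prop :=
    fun i j => i.1 < j.1
  have wfr : WellFounded r := InvImage.wf _ Ordinal.lt_wf
  have key : ∀ (ξ : {o : Ordinal.{0} // o < κ.ord}) (rec : ∀ η, r η ξ → A), ∃ a : A, a ∈ AD.D ∧ a ≤ v ξ ∧
      (((∀ η hη, rec η hη ∈ AD.D) ∧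
        (∀ (η₁ η₂ : {o : Ordinal.{0} // o < κ.ord}) (h₁ : r η₁ ξ) (h₂ : r η₂ ξ), (η₁ : Ordinal.{0}) ≤ (η₂ : Ordinal.{0}) →
          rec η₂ h₂ ≤ rec η₁ h₁)) → ∀ η hη, a ≤ rec η hη) := by
    intro ξ rec
    by_cases hgood : (∀ η hη, rec η hη ∈ AD.D) ∧
        (∀ (η₁ η₂ : {o : Ordinal.{0} // o < κ.ord}) (h₁ : r η₁ ξ) (h₂ : r η₂ ξ), (η₁ : Ordinal.{0}) ≤ (η₂ : Ordinal.{0}) →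
          rec η₂ h₂ ≤ rec η₁ h₁)
    · obtain ⟨b0, hb0D, hb0⟩ := AD.D_closed ξ.1 (lt_trans ξ.2 hsucc)
        (fun i => rec ⟨i.1, lt_trans i.2 ξ.2⟩ i.2)
        (fun i => hgood.1 _ _)
        (fun i j hle => hgood.2 _ _ _ _ hle)
      obtain ⟨d, hdD, hd⟩ := AD.D_dense (AD.glb b0 (v ξ))
      refine ⟨d, hdD, hd.trans (AD.glb_le_right _ _), fun _ η hη => ?_⟩
      exact (hd.trans (AD.glb_le_left _ _)).trans (hb0 ⟨η.1, hη⟩)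
    · obtain ⟨d, hdD, hd⟩ := AD.D_dense (v ξ)
      exact ⟨d, hdD, hd, fun h => absurd h hgood⟩
  let g : {o : Ordinal.{0} // o < κ.ord} → A := WellFounded.fix wfr (fun ξ rec => Classical.choose (key ξ rec))
  have gspec : ∀ ξ : {o : Ordinal.{0} // o < κ.ord}, g ξ = Classical.choose (key ξ (fun η _ => g η)) := fun ξ =>
    WellFounded.fix_eq wfr _ ξ
  have main : ∀ ξ : {o : Ordinal.{0} // o < κ.ord}, g ξ ∈ AD.D ∧ g ξ ≤ v ξ ∧ ∀ η : {o : Ordinal.{0} // o < κ.ord}, r η ξ → g ξ ≤ g η := by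
    intro ξ
    refine wfr.induction (C := fun ξ => g ξ ∈ AD.D ∧ g ξ ≤ v ξ ∧
      ∀ η : {o : Ordinal.{0} // o < κ.ord}, r η ξ → g ξ ≤ g η) ξ ?_
    clear ξ
    intro ξ IH
    have hsp := Classical.choose_spec (key ξ (fun η _ => g η))
    rw [← gspec ξ] at hsp
    refine ⟨hsp.1, hsp.2.1, fun η hη => ?_⟩
    refine hsp.2.2 ⟨fun η' hη' => (IH η' hη').1, fun η₁ η₂ h₁ h₂ hle => ?_⟩ η hη
    rcases eq_or_lt_of_le hle with heq | hlt
    · have : η₁ = η₂ := Subtype.ext heq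
      subst this; exact le_refl _
    · exact (IH η₂ h₂).2.2 η₁ hlt
  obtain ⟨b, hbD, hb⟩ := AD.D_closed κ.ord hsucc g (fun i => (main i).1)
    (fun i j hle => by
      rcases eq_or_lt_of_le hle with heq | hlt
      · have : i = j := Subtype.ext heq
        subst this; exact le_refl _
      · exact (main j).2.2 i hlt)
  exact ⟨b, hbD, fun ξ => (hb ξ).trans (main ξ).2.1⟩

lemma exists_AD_lb_family (AD : AData κ A) (hk : Cardinal.aleph0.{0} < κ) (a₀ : A) {ι : Type 1}
    (hι : Cardinal.mk ι ≤ Cardinal.lift.{1,0} κ) (v : ι → A) :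
    ∃ b ∈ AD.D, ∀ i, b ≤ v i := by
  rcases isEmpty_or_nonempty ι with hemp | hne
  · obtain ⟨d, hdD, -⟩ := AD.D_dense a₀
    exact ⟨d, hdD, fun i => isEmptyElim i⟩
  · have hmk : Cardinal.mk ι ≤ Cardinal.mk {o : Ordinal.{0} // o < κ.ord} := by
      have h2 : Cardinal.mk {o : Ordinal.{0} // o < κ.ord} = Cardinal.lift.{1,0} κ := by
        have h1 := Ordinal.mk_Iio_ordinal κ.ord
        rw [Cardinal.card_ord] at h1
        exact h1
      rw [h2]; exact hι
    obtain ⟨f⟩ := Cardinal.le_def _ _ |>.mp hmk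
    obtain ⟨b, hbD, hb⟩ := exists_AD_lb AD (v ∘ Function.invFun f)
    refine ⟨b, hbD, fun i => ?_⟩
    have := hb (f i)
    rwa [Function.comp_apply, Function.leftInverse_invFun f.injective i] at this

lemma mk_T_le (hk : Cardinal.aleph0.{0} < κ) (p : HCond κ U A jmap) :
    Cardinal.mk p.T ≤ Cardinal.lift.{1,0} κ := by
  have hemb : Function.Injective (fun s : p.T =>
      (List.pmap (fun a h => (⟨a, h⟩ : {o : Ordinal.{0} // o < κ.ord})) s.1
        (fun a ha => (p.regular s.1 s.2 a ha).1))) := by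
    intro s t hst
    apply Subtype.ext
    have hs := congrArg (List.map (Subtype.val (p := fun o : Ordinal.{0} => o < κ.ord))) hst
    simp only [List.map_pmap] at hs
    simpa using hs
  have h1 : Cardinal.mk p.T ≤ Cardinal.mk (List {o : Ordinal.{0} // o < κ.ord}) :=
    Cardinal.mk_le_of_injective hemb
  have hne : Nonempty {o : Ordinal.{0} // o < κ.ord} := by
    refine ⟨⟨0, ?_⟩⟩
    have : (0 : Cardinal.{0}) < κ := lt_trans Cardinal.aleph0_pos hk
    rwa [← Cardinal.ord_zero, Cardinal.ord_lt_ord]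
  have h2 : Cardinal.mk (List {o : Ordinal.{0} // o < κ.ord}) =
      max (Cardinal.mk {o : Ordinal.{0} // o < κ.ord}) (Cardinal.aleph0.{1}) :=
    Cardinal.mk_list_eq_max_mk_aleph0 _
  have h3 : Cardinal.mk {o : Ordinal.{0} // o < κ.ord} = Cardinal.lift.{1,0} κ := by
    have h1 := Ordinal.mk_Iio_ordinal κ.ord
    rw [Cardinal.card_ord] at h1
    exact h1
  rw [h2, h3] at h1
  rwa [max_eq_left (le_of_lt (aleph0_lt_lift hk))] at h1

/-- Crush a condition's side conditions to a single element of `AD.D`. -/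
lemma exists_crush (AD : AData κ A) (hk : Cardinal.aleph0.{0} < κ) (p : HCond κ U A jmap) :
    ∃ b ∈ AD.D, ∀ s ∈ p.T, b ≤ p.F s := by
  obtain ⟨b, hbD, hb⟩ := exists_AD_lb_family AD hk (p.F p.stem) (mk_T_le hk p)
    (fun s : p.T => p.F s)
  exact ⟨b, hbD, fun s hs => hb ⟨s, hs⟩⟩

/-! ### The goodness rank and the main induction -/

variable (D : Set (HCond κ U A jmap))

/-- `Good D m p` : a direct extension into `D` can be reached by `m`-fold splitting. -/
def Good : ℕ → HCond κ U A jmap → Prop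
  | 0 => fun p => ∃ r ∈ D, r ≤ p ∧ r.stem = p.stem
  | (m+1) => fun p => {α : Ordinal.{0} |
      ∃ h : p.stem ++ [α] ∈ p.T,
        Good m (restrict p (p.stem ++ [α]) h (List.prefix_append _ _))} ∈ U.U

lemma main_lemma (AD : AData κ A) (jc : ∀ a : A, jmap (fun _ => a) = a)
    (hD_open : ∀ q ∈ D, ∀ r : HCond κ U A jmap, r ≤ q → r ∈ D) :
    ∀ (m : ℕ) (p : HCond κ U A jmap), Good D m p →
      ∃ pstar : HCond κ U A jmap, pstar ≤ p ∧ pstar.stem = p.stem ∧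
        ∀ q : HCond κ U A jmap, q ≤ pstar → p.stem.length + m ≤ q.stem.length → q ∈ D := by
  intro m
  induction m with
  | zero =>
    intro p hgood
    obtain ⟨r, hrD, hrle, hrstem⟩ := hgood
    exact ⟨r, hrle, hrstem, fun q hq _ => hD_open r hrD q hq⟩
  | succ m IH =>
    intro p hgood
    classical
    have hk : Cardinal.aleph0.{0} < κ := aleph0_lt_of_cond p
    have hg : {α : Ordinal.{0} | ∃ h : p.stem ++ [α] ∈ p.T,
        Good D m (restrict p (p.stem ++ [α]) h (List.prefix_append _ _))} ∈ U.U := hgood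
    set X : Set Ordinal.{0} := {α : Ordinal.{0} | ∃ h : p.stem ++ [α] ∈ p.T,
        Good D m (restrict p (p.stem ++ [α]) h (List.prefix_append _ _))} with hX
    have H : ∀ α, α ∈ X → ∃ ps : HCond κ U A jmap,
        ps.T ⊆ p.T ∧ (∀ s ∈ ps.T, ps.F s ≤ p.F s) ∧
        ps.stem = p.stem ++ [α] ∧
        (∀ s ∈ ps.T, s <+: p.stem ++ [α] ∨ p.stem ++ [α] <+: s) ∧
        (∀ q : HCond κ U A jmap, q ≤ ps →
          p.stem.length + (m + 1) ≤ q.stem.length → q ∈ D) := by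
      intro α hα
      obtain ⟨hmem, hgd⟩ := hα
      obtain ⟨ps, hle, hstem, hprop⟩ := IH _ hgd
      refine ⟨ps, fun s hs => (hle.1 hs).1, fun s hs => hle.2 s hs, hstem,
        fun s hs => (hle.1 hs).2, fun q hq hlen => hprop q hq ?_⟩
      show (p.stem ++ [α]).length + m ≤ q.stem.length
      simp only [List.length_append, List.length_cons, List.length_nil]
      omega
    choose ps h1 h2 h3 h4 h5 using H
    have HB : ∀ α (hα : α ∈ X), ∃ b, b ∈ AD.D ∧ ∀ s ∈ (ps α hα).T, b ≤ (ps α hα).F s := by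
      intro α hα
      obtain ⟨b, hbD, hb⟩ := exists_crush AD hk (ps α hα)
      exact ⟨b, hbD, hb⟩
    choose bb hbbD hble using HB
    have hXsub : X ⊆ Set.Iio κ.ord := U.subsets _ hg
    obtain ⟨b, hbD, hble'⟩ := exists_AD_lb AD
      (fun ξ : {o : Ordinal.{0} // o < κ.ord} =>
        if h : ξ.1 ∈ X then bb ξ.1 h else p.F p.stem)
    have hbb : ∀ α (hα : α ∈ X), b ≤ bb α hα := by
      intro α hα
      have hlt : α < κ.ord := hXsub hα
      have := hble' ⟨α, hlt⟩
      rwa [dif_pos hα] at this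
    have hbps : ∀ α (hα : α ∈ X), ∀ s ∈ (ps α hα).T, b ≤ (ps α hα).F s :=
      fun α hα s hs => (hbb α hα).trans (hble α hα s hs)
    obtain ⟨α₀, hα₀⟩ := U_nonempty hg
    have hmemps : ∀ α (hα : α ∈ X), p.stem ++ [α] ∈ (ps α hα).T := by
      intro α hα
      rw [← h3 α hα]
      exact (ps α hα).stem_mem
    have hprefps : ∀ α (hα : α ∈ X), ∀ s, s <+: p.stem ++ [α] → s ∈ (ps α hα).T :=
      fun α hα s hs => (ps α hα).prefix_closed _ (hmemps α hα) s hs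
    set TS : Set (List Ordinal.{0}) :=
      {s | s <+: p.stem ∧ s ∈ p.T} ∪
      {s | ∃ α, ∃ hα : α ∈ X, (p.stem ++ [α]) <+: s ∧ s ∈ (ps α hα).T} with hTS
    have hTSsub : TS ⊆ p.T := by
      rintro s (⟨hs1, hs2⟩ | ⟨α, hα, hpre, hsT⟩)
      · exact hs2
      · exact h1 α hα hsT
    -- classify members of TS extending `p.stem ++ [α]`
    have hTSext : ∀ s ∈ TS, ∀ α (hα : α ∈ X), p.stem ++ [α] <+: s → s ∈ (ps α hα).T := by
      rintro s (⟨hs1, hs2⟩ | ⟨α', hα', hpre', hmem⟩) α hα hpre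
      · exfalso
        have l1 := hs1.length_le
        have l2 := hpre.length_le
        simp only [List.length_append, List.length_cons, List.length_nil] at l1 l2
        omega
      · have : α' = α := concat_prefix_concat hpre' hpre rfl
        subst this
        exact hmem
    refine ⟨⟨TS, ?_, fun s hs => p.increasing s (hTSsub hs),
      fun s hs => p.regular s (hTSsub hs), p.stem, Or.inl ⟨List.prefix_rfl, p.stem_mem⟩,
      ?_, ?_, fun _ => b, fun _ _ _ => jc b⟩, ⟨hTSsub, ?_⟩, rfl, ?_⟩
    · -- prefix_closed
      rintro s (⟨hs1, hs2⟩ | ⟨α, hα, hpre, hsT⟩) u hu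
      · exact Or.inl ⟨hu.trans hs1, p.prefix_closed _ hs2 u hu⟩
      · rcases prefix_trichotomy hu hpre with h' | h'
        · rcases prefix_concat_cases h' with h'' | h''
          · exact Or.inl ⟨h'', h1 α hα (hprefps α hα u h')⟩
          · exact Or.inr ⟨α, hα, h'' ▸ List.prefix_rfl, h'' ▸ hmemps α hα⟩
        · exact Or.inr ⟨α, hα, h', (ps α hα).prefix_closed s hsT u hu⟩
    · -- stem_comparable
      rintro s (⟨hs1, _⟩ | ⟨α, hα, hpre, _⟩)
      · exact Or.inl hs1
      · exact Or.inr ((List.prefix_append _ _).trans hpre)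
    · -- splitting
      intro s hs hps
      rcases hs with ⟨hs1, hs2⟩ | ⟨α, hα, hpre, hsT⟩
      · have hseq : s = p.stem := hs1.eq_of_length (Nat.le_antisymm hs1.length_le hps.length_le)
        subst hseq
        have hset : {β : Ordinal.{0} | p.stem ++ [β] ∈ TS} = X := by
          ext β
          constructor
          · rintro (⟨hpre', _⟩ | ⟨α', hα', hpre', hmem⟩)
            · exfalso
              have := hpre'.length_le
              simp only [List.length_append, List.length_cons, List.length_nil] at this
              omega
            · have : α' = β := concat_prefix_concat hpre' List.prefix_rfl rfl
              subst this
              exact hα'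
          · intro hβ
            exact Or.inr ⟨β, hβ, List.prefix_rfl, hmemps β hβ⟩
        rw [hset]
        exact hg
      · have hset : {β : Ordinal.{0} | s ++ [β] ∈ TS} =
            {β : Ordinal.{0} | s ++ [β] ∈ (ps α hα).T} := by
          ext β
          constructor
          · intro hmem
            exact hTSext _ hmem α hα (hpre.trans (List.prefix_append s [β]))
          · intro hmem
            exact Or.inr ⟨α, hα, hpre.trans (List.prefix_append s [β]), hmem⟩
        rw [hset]
        refine (ps α hα).splitting s hsT ?_
        rw [h3 α hα]
        exact hpre
    · -- F-extension for pstar ≤ p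
      rintro s (⟨hs1, hs2⟩ | ⟨α, hα, hpre, hsT⟩)
      · have hsps : s ∈ (ps α₀ hα₀).T :=
          hprefps α₀ hα₀ s (hs1.trans (List.prefix_append p.stem [α₀]))
        exact (hbps α₀ hα₀ s hsps).trans (h2 α₀ hα₀ s hsps)
      · exact (hbps α hα s hsT).trans (h2 α hα s hsT)
    · -- the strong Prikry property below pstar
      intro q hq hlen
      have hqstem : q.stem ∈ TS := hq.1 q.stem_mem
      rcases hqstem with ⟨hs1, _⟩ | ⟨α, hα, hpre, hmemq⟩
      · exfalso
        have := hs1.length_le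
        omega
      · have hsub : q.T ⊆ (ps α hα).T := by
          intro s hs
          have hsTS : s ∈ TS := hq.1 hs
          rcases q.stem_comparable s hs with hc | hc
          · rcases prefix_trichotomy hc hpre with h' | h'
            · exact hprefps α hα s h'
            · exact hTSext s hsTS α hα h'
          · exact hTSext s hsTS α hα (hpre.trans hc)
        have hqle : q ≤ ps α hα :=
          ⟨hsub, fun s hs => (hq.2 s hs).trans (hbps α hα s (hsub hs))⟩
        exact h5 α hα q hqle hlen

/-! ### Every condition has a goodness rank -/

lemma exists_good (hD_dense : ∀ p : HCond κ U A jmap, ∃ q ∈ D, q ≤ p)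
    (p : HCond κ U A jmap) : ∃ m : ℕ, Good D m p := by
  by_contra hbad'
  push_neg at hbad'
  have hbad : ∀ m : ℕ, ¬ Good D m p := hbad'
  have hk : Cardinal.aleph0.{0} < κ := aleph0_lt_of_cond p
  set Bad : List Ordinal.{0} → Prop :=
    fun t => ∀ (ht : t ∈ p.T) (hpt : p.stem <+: t) (m : ℕ),
      ¬ Good D m (restrict p t ht hpt) with hBadDef
  have hBadstem : Bad p.stem := by
    intro ht hpt m
    rw [restrict_stem_self p ht hpt]
    exact hbad m
  have hstep : ∀ t (ht : t ∈ p.T) (hpt : p.stem <+: t), Bad t →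
      {α : Ordinal.{0} | t ++ [α] ∈ p.T ∧ Bad (t ++ [α])} ∈ U.U := by
    intro t ht hpt hBt
    set R := restrict p t ht hpt with hR
    have hSp_eq : {α : Ordinal.{0} | t ++ [α] ∈ R.T} = {α : Ordinal.{0} | t ++ [α] ∈ p.T} := by
      ext α
      simp only [hR, restrict, Set.mem_setOf_eq, Set.mem_sep_iff]
      constructor
      · exact fun h => h.1
      · intro h
        exact ⟨h, Or.inr (List.prefix_append t [α])⟩
    have hSp : {α : Ordinal.{0} | t ++ [α] ∈ p.T} ∈ U.U := by
      rw [← hSp_eq]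
      exact R.splitting t R.stem_mem List.prefix_rfl
    have hSm : ∀ m : ℕ, {α : Ordinal.{0} | ∃ h : t ++ [α] ∈ p.T,
        Good D m (restrict p (t ++ [α]) h (hpt.trans (List.prefix_append t [α])))} ∉ U.U := by
      intro m hmem
      apply hBt ht hpt (m + 1)
      show {α : Ordinal.{0} | ∃ h : R.stem ++ [α] ∈ R.T,
        Good D m (restrict R (R.stem ++ [α]) h (List.prefix_append _ _))} ∈ U.U
      have hseteq : {α : Ordinal.{0} | ∃ h : t ++ [α] ∈ R.T,
          Good D m (restrict R (t ++ [α]) h (List.prefix_append t [α]))} =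
          {α : Ordinal.{0} | ∃ h : t ++ [α] ∈ p.T,
          Good D m (restrict p (t ++ [α]) h (hpt.trans (List.prefix_append t [α])))} := by
        ext α
        constructor
        · rintro ⟨h, hgd⟩
          refine ⟨h.1, ?_⟩
          rwa [restrict_restrict ht hpt h (List.prefix_append t [α]) h.1
            (hpt.trans (List.prefix_append t [α]))] at hgd
        · rintro ⟨h, hgd⟩
          have hR' : t ++ [α] ∈ R.T := ⟨h, Or.inr (List.prefix_append t [α])⟩
          refine ⟨hR', ?_⟩
          rw [restrict_restrict ht hpt hR' (List.prefix_append t [α]) h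
            (hpt.trans (List.prefix_append t [α]))]
          exact hgd
      rw [← hseteq] at hmem
      exact hmem
    have hsub_m : ∀ m : ℕ, {α : Ordinal.{0} | ∃ h : t ++ [α] ∈ p.T,
        Good D m (restrict p (t ++ [α]) h (hpt.trans (List.prefix_append t [α])))} ⊆
        Set.Iio κ.ord := by
      rintro m α ⟨h, -⟩
      exact (p.regular _ h α (by simp)).1
    have hC : ∀ m : ℕ, ({α : Ordinal.{0} | t ++ [α] ∈ p.T} ∩
        (Set.Iio κ.ord \ {α : Ordinal.{0} | ∃ h : t ++ [α] ∈ p.T,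
          Good D m (restrict p (t ++ [α]) h (hpt.trans (List.prefix_append t [α])))})) ∈ U.U :=
      fun m => U_inter hk hSp (U_compl (hsub_m m) (hSm m))
    have hInt := U_iInter hk _ hC
    refine U.upward _ hInt _ ?_ ?_
    · intro α hα
      simp only [Set.mem_iInter] at hα
      have h0 := (hα 0).1
      refine ⟨h0, ?_⟩
      intro ht' hpt' m
      intro hgd
      exact ((hα m).2).2 ⟨h0, hgd⟩
    · rintro α ⟨hmem, -⟩
      exact (p.regular _ hmem α (by simp)).1
  -- the bad tree
  set TB : Set (List Ordinal.{0}) :=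
    {s | s ∈ p.T ∧ (s <+: p.stem ∨ (p.stem <+: s ∧ ∀ u, u <+: s → p.stem <+: u → Bad u))}
    with hTB
  have hchain : ∀ s ∈ TB, p.stem <+: s → (∀ u, u <+: s → p.stem <+: u → Bad u) := by
    rintro s ⟨hsT, (hs1 | ⟨_, hs2⟩)⟩ hps
    · have hseq : s = p.stem := hs1.eq_of_length (Nat.le_antisymm hs1.length_le hps.length_le)
      subst hseq
      intro u hu hpu
      have : u = p.stem := (hpu.eq_of_length (Nat.le_antisymm hpu.length_le hu.length_le)).symm
      rw [this]
      exact hBadstem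
    · exact hs2
  set qB : HCond κ U A jmap := {
    T := TB
    prefix_closed := by
      rintro s ⟨hsT, halt⟩ u hu
      refine ⟨p.prefix_closed _ hsT u hu, ?_⟩
      rcases halt with hs1 | ⟨hps, hch⟩
      · exact Or.inl (hu.trans hs1)
      · rcases prefix_trichotomy hu hps with h' | h'
        · exact Or.inl h'
        · exact Or.inr ⟨h', fun w hw hpw => hch w (hw.trans hu) hpw⟩
    increasing := fun s hs => p.increasing s hs.1
    regular := fun s hs => p.regular s hs.1
    stem := p.stem
    stem_mem := ⟨p.stem_mem, Or.inl List.prefix_rfl⟩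
    stem_comparable := by
      rintro s ⟨hsT, (hs1 | ⟨hps, -⟩)⟩
      · exact Or.inl hs1
      · exact Or.inr hps
    splitting := by
      intro s hs hps
      have hch := hchain s hs hps
      have hBs : Bad s := hch s List.prefix_rfl hps
      have hstep' := hstep s hs.1 hps hBs
      refine U.upward _ hstep' _ ?_ ?_
      · rintro α ⟨hmem, hB⟩
        refine ⟨hmem, Or.inr ⟨hps.trans (List.prefix_append s [α]), ?_⟩⟩
        intro u hu hpu
        rcases prefix_concat_cases hu with h' | h'
        · exact hch u h' hpu
        · rw [h']
          exact hB
      · rintro α ⟨hmem, -⟩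
        exact (p.regular _ hmem α (by simp)).1
    F := p.F
    stabilization := fun s hs hps => p.stabilization s hs.1 hps } with hqB
  have hqB_le : qB ≤ p := ⟨fun s hs => hs.1, fun s _ => le_refl _⟩
  obtain ⟨r, hrD, hrle⟩ := hD_dense qB
  have hrstem : p.stem <+: r.stem := stem_prefix_of_le (p := qB) hrle
  have hrT : r.stem ∈ TB := hrle.1 r.stem_mem
  have hBadt : Bad r.stem := hchain r.stem hrT hrstem r.stem List.prefix_rfl hrstem
  apply hBadt hrT.1 hrstem 0
  exact ⟨r, hrD, le_restrict hrT.1 hrstem (hrle.trans hqB_le) List.prefix_rfl, rfl⟩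

end AUX

/-- The Strong Prikry Property for `ℍ`: for every dense open `D ⊆ ℍ` and every
condition `p` there are a direct extension `p⋆ ≤* p` and an `n < ω` such that every
`q ≤ p⋆` whose stem has length at least `n` belongs to `D`. -/
theorem H_strong_prikry_property (κ : Cardinal.{0}) (U : NormalMeasure κ)
    (A : Type 1) [Preorder A] (AD : AData κ A)
    (jmap : (Ordinal.{0} → A) → A)
    (jmap_const : ∀ a : A, jmap (fun _ => a) = a)
    (jmap_mono : ∀ g h : Ordinal.{0} → A,
      {α | α < κ.ord ∧ g α ≤ h α} ∈ U.U → jmap g ≤ jmap h)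
    (D : Set (HCond κ U A jmap))
    (hD_dense : ∀ p : HCond κ U A jmap, ∃ q ∈ D, q ≤ p)
    (hD_open : ∀ q ∈ D, ∀ r : HCond κ U A jmap, r ≤ q → r ∈ D)
    (p : HCond κ U A jmap) :
    ∃ pstar : HCond κ U A jmap, HDirectExt pstar p ∧
      ∃ n : ℕ, ∀ q : HCond κ U A jmap, q ≤ pstar → n ≤ q.stem.length → q ∈ D := by
  obtain ⟨m, hm⟩ := exists_good D hD_dense p
  obtain ⟨pstar, hle, hstem, hprop⟩ := main_lemma D AD jmap_const hD_open m p hm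
  exact ⟨pstar, ⟨hle, by rw [hstem]⟩, p.stem.length + m, hprop⟩

end PaperStatementEighteen
end
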